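/- arXiv:2310.17375 — 3 statements merged into one kernel-verified Lean document; each statement's English description precedes it below -/
import Mathlib

section
/- Let A be a (possibly noncommutative) ring with identity, let e be a central idempotent of A, and let e_1, …, e_d be idempotents of A such that: (i) e_i ∈ A·e for every i; (ii) e_i·e_j = 0 whenever i > j; and (iii) e ∈ A·e_1 + A·e_2 + ⋯ + A·e_d. Then e = 1 − (1−e_1)(1−e_2)⋯(1−e_d), where the product is taken in increasing order of the indices. -/
/-- If `e` is a central idempotent of a ring `A`, and `e₁, …, e_d` are idempotents of `A`
lying in the left ideal `A·e`, pairwise satisfying `eᵢ·eⱼ = 0` for `i > j`, and such that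
`e` lies in the sum of left ideals `A·e₁ + ⋯ + A·e_d`, then
`e = 1 − (1−e₁)(1−e₂)⋯(1−e_d)` (product in increasing order of indices). -/
theorem stmt0 {A : Type*} [Ring A] (e : A)
    (he : IsIdempotentElem e) (hcentral : ∀ x : A, e * x = x * e)
    (d : ℕ) (f : Fin d → A)
    (hidem : ∀ i, IsIdempotentElem (f i))
    (hmem : ∀ i, f i ∈ Submodule.span A ({e} : Set A))
    (horth : ∀ i j : Fin d, j < i → f i * f j = 0)
    (hgen : e ∈ ∑ i : Fin d, Submodule.span A ({f i} : Set A)) :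
    e = 1 - ((List.finRange d).map (fun i => 1 - f i)).prod := by
  set P : A := ((List.finRange d).map (fun i => 1 - f i)).prod with hP
  -- each f i absorbs e on the right
  have hfe : ∀ i, f i * e = f i := by
    intro i
    obtain ⟨a, ha⟩ := Submodule.mem_span_singleton.mp (hmem i)
    rw [← ha]
    simp only [smul_eq_mul, mul_assoc, he.eq]
  -- P * (1 - e) = 1 - e, for any sublist of factors
  have hPe : ∀ l : List (Fin d), (l.map (fun i => 1 - f i)).prod * (1 - e) = 1 - e := by
    intro l
    induction l with
    | nil => simp
    | cons k t ih =>
        simp only [List.map_cons, List.prod_cons, mul_assoc, ih]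
        rw [sub_mul, one_mul, mul_sub, mul_one, hfe k]
        simp
  -- f j * P = 0
  have hfP : ∀ (j : Fin d) (l : List (Fin d)), l.Pairwise (· < ·) → j ∈ l →
      f j * (l.map (fun i => 1 - f i)).prod = 0 := by
    intro j l hs hj
    induction l with
    | nil => simp at hj
    | cons k t ih =>
        simp only [List.map_cons, List.prod_cons]
        rcases eq_or_ne k j with rfl | hkj
        · rw [← mul_assoc, mul_sub, mul_one, (hidem k).eq, sub_self, zero_mul]
        · have hjt : j ∈ t := by
            rcases List.mem_cons.mp hj with h | h
            · exact absurd h.symm hkj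
            · exact h
          have hkj' : k < j := (List.pairwise_cons.mp hs).1 j hjt
          rw [← mul_assoc, mul_sub, mul_one, horth j k hkj', sub_zero]
          exact ih (List.pairwise_cons.mp hs).2 hjt
  -- e * P = 0 via linearity
  have heP : e * P = 0 := by
    have : (∑ i : Fin d, Submodule.span A ({f i} : Set A)) ≤
        LinearMap.ker (LinearMap.toSpanSingleton A A P) := by
      refine Finset.sum_induction _ (· ≤ LinearMap.ker (LinearMap.toSpanSingleton A A P))
        (fun a b ha hb => ?_) bot_le (fun i _ => Submodule.span_le.mpr ?_)
      · rw [Submodule.add_eq_sup]; exact sup_le ha hb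
      rintro x rfl
      simp only [SetLike.mem_coe, LinearMap.mem_ker, LinearMap.toSpanSingleton_apply,
        smul_eq_mul]
      exact hfP i (List.finRange d) (List.pairwise_lt_finRange d) (List.mem_finRange i)
    have := this hgen
    simpa using this
  have hPe' : P * (1 - e) = 1 - e := hPe (List.finRange d)
  have hPeq : P = 1 - e := by
    have h1 : P * e = 0 := by rw [← hcentral P, heP]
    calc P = P * e + P * (1 - e) := by rw [mul_sub, mul_one]; abel
    _ = 1 - e := by rw [h1, hPe', zero_add]
  rw [hPeq, sub_sub_cancel]
end

section
/- Let F_q be a finite field of characteristic p and n a positive integer with p > n. Let λ be a partition of n with λ ≠ λ', where λ' is the conjugate partition. Let T_1, …, T_{d_λ} be an enumeration of the standard Young tableaux of shape λ such that for all i > j one has e_{T_i}·e_{T_j} = 0 and ē_{T_i'}·ē_{T_j'} = 0 in F_q S_n, where T_i' denotes the transposed tableau of T_i (a tableau of shape λ'). Set e_λ^{S_n} = 1 − ∏_{i=1}^{d_λ}(1−e_{T_i}) and e_{λ'}^{S_n} = 1 − ∏_{i=1}^{d_λ}(1−ē_{T_i'}), products taken in increasing order of indices. Then every odd permutation of S_n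 has coefficient 0 in e_λ^{S_n} + e_{λ'}^{S_n}; that is, the support of e_λ^{S_n} + e_{λ'}^{S_n} is contained in the alternating group A_n. -/
open Equiv

/-- A Young tableau of shape `μ` with entries in `Fin n`: a bijective filling of the cells. -/
abbrev Tab (n : ℕ) (μ : YoungDiagram) : Type := {c : ℕ × ℕ // c ∈ μ} ≃ Fin n

/-- A tableau is standard if entries increase along rows and down columns. -/
def IsStandard {n : ℕ} {μ : YoungDiagram} (T : Tab n μ) : Prop :=
  ∀ c c' : {c : ℕ × ℕ // c ∈ μ},
    ((c.1.1 = c'.1.1 ∧ c.1.2 < c'.1.2) ∨ (c.1.2 = c'.1.2 ∧ c.1.1 < c'.1.1)) → T c < T c'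

/-- `d_λ`: the number of standard Young tableaux of shape `μ`. -/
noncomputable def numSYT (n : ℕ) (μ : YoungDiagram) : ℕ :=
  Nat.card {T : Tab n μ // IsStandard T}

/-- Row index of the cell containing entry `k`. -/
def rowOf {n : ℕ} {μ : YoungDiagram} (T : Tab n μ) (k : Fin n) : ℕ := (T.symm k).1.1

/-- Column index of the cell containing entry `k`. -/
def colOf {n : ℕ} {μ : YoungDiagram} (T : Tab n μ) (k : Fin n) : ℕ := (T.symm k).1.2

/-- The row stabilizer of a tableau, as a finset of permutations. -/
def rowStab {n : ℕ} {μ : YoungDiagram} (T : Tab n μ) : Finset (Perm (Fin n)) :=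
  Finset.univ.filter fun π => ∀ k, rowOf T (π k) = rowOf T k

/-- The column stabilizer of a tableau, as a finset of permutations. -/
def colStab {n : ℕ} {μ : YoungDiagram} (T : Tab n μ) : Finset (Perm (Fin n)) :=
  Finset.univ.filter fun π => ∀ k, colOf T (π k) = colOf T k

/-- The idempotent `e_T = (d_λ/n!) Σ_{ρ∈R_T} Σ_{σ∈C_T} sgn(σ) σρ`. -/
noncomputable def eT (F : Type*) [Field F] {n : ℕ} {μ : YoungDiagram} (T : Tab n μ) :
    MonoidAlgebra F (Perm (Fin n)) :=
  ((numSYT n μ : F) / (n.factorial : F)) •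
    ∑ ρ ∈ rowStab T, ∑ σ ∈ colStab T,
      ((Perm.sign σ : ℤ) : F) • MonoidAlgebra.single (σ * ρ) (1 : F)

/-- The idempotent `ē_T = (d_λ/n!) Σ_{ρ∈R_T} Σ_{σ∈C_T} sgn(σ) ρσ`. -/
noncomputable def eTbar (F : Type*) [Field F] {n : ℕ} {μ : YoungDiagram} (T : Tab n μ) :
    MonoidAlgebra F (Perm (Fin n)) :=
  ((numSYT n μ : F) / (n.factorial : F)) •
    ∑ ρ ∈ rowStab T, ∑ σ ∈ colStab T,
      ((Perm.sign σ : ℤ) : F) • MonoidAlgebra.single (ρ * σ) (1 : F)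

/-- The cells of the transposed diagram biject with the cells of the diagram. -/
def cellSwap (μ : YoungDiagram) : {c : ℕ × ℕ // c ∈ μ.transpose} ≃ {c : ℕ × ℕ // c ∈ μ} where
  toFun c := ⟨c.1.swap, YoungDiagram.mem_transpose.mp c.2⟩
  invFun c := ⟨c.1.swap, by simp [YoungDiagram.mem_transpose]⟩
  left_inv c := by simp
  right_inv c := by simp

/-- The transposed tableau, a tableau of shape `μ.transpose`. -/
def Tab.transpose {n : ℕ} {μ : YoungDiagram} (T : Tab n μ) : Tab n μ.transpose :=
  (cellSwap μ).trans T


/-!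
The sign twist `g ↦ sgn(g) g` extends to an algebra automorphism `φ` of `F[Sₙ]`. The row
stabiliser of `T'` is the column stabiliser of `T` and vice versa, and
`sgn(σρ) sgn(σ) = sgn(ρ)`, so `φ(e_T) = ē_{T'}`. Being multiplicative, `φ` then maps `e_λ^{Sₙ}`
to `e_{λ'}^{Sₙ}`; since `φ` negates the coefficient of every odd permutation, the two
coefficients cancel in the sum.
-/

open Equiv

namespace MonoidAlgebra

variable {R G : Type*} [CommSemiring R] [Monoid G]

noncomputable def twist (χ : G →* R) : MonoidAlgebra R G →ₐ[R] MonoidAlgebra R G :=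
  lift R (MonoidAlgebra R G) G
    { toFun g := single g (χ g)
      map_one' := by simp [one_def]
      map_mul' g h := by simp [single_mul_single] }

lemma twist_single (χ : G →* R) (g : G) (r : R) : twist χ (single g r) = single g (χ g * r) := by
  simp [twist, lift_single, mul_comm]

lemma coeff_twist (χ : G →* R) (x : MonoidAlgebra R G) (g : G) :
    (twist χ x).coeff g = χ g * x.coeff g := by
  classical
  induction x using induction_linear with
  | zero => simp
  | add x y hx hy => simp [hx, hy, mul_add]
  | single h r => by_cases hgh : h = g <;> simp [twist_single, hgh]

end MonoidAlgebra

section SignTwist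

variable (R : Type*) [CommRing R] (α : Type*) [Fintype α] [DecidableEq α]

noncomputable abbrev signTwist : MonoidAlgebra R (Perm α) →ₐ[R] MonoidAlgebra R (Perm α) :=
  MonoidAlgebra.twist ((Int.castRingHom R).toMonoidHom.comp ((Units.coeHom ℤ).comp Perm.sign))

variable {R α}

lemma signTwist_single (g : Perm α) (r : R) :
    signTwist R α (MonoidAlgebra.single g r) = MonoidAlgebra.single g ((Perm.sign g : ℤ) * r) :=
  MonoidAlgebra.twist_single _ g r

lemma coeff_add_signTwist_of_sign_eq_neg_one (x : MonoidAlgebra R (Perm α)) {g : Perm α}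
    (hg : Perm.sign g = -1) : (x + signTwist R α x).coeff g = 0 := by
  simp [MonoidAlgebra.coeff_twist, hg]

end SignTwist

section Transpose

variable {n : ℕ} {μ : YoungDiagram}

lemma rowStab_transpose (T : Tab n μ) : rowStab T.transpose = colStab T := rfl

lemma colStab_transpose (T : Tab n μ) : colStab T.transpose = rowStab T := rfl

lemma isStandard_transpose_iff {T : Tab n μ} : IsStandard T.transpose ↔ IsStandard T := by
  constructor
  · intro h c c' hcc
    simpa [Tab.transpose] using h ((cellSwap μ).symm c) ((cellSwap μ).symm c') hcc.symm
  · intro h c c' hcc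
    exact h _ _ hcc.symm

lemma numSYT_transpose : numSYT n μ.transpose = numSYT n μ :=
  (Nat.card_congr (((cellSwap μ).symm.equivCongr (Equiv.refl _)).subtypeEquiv
    fun _ => isStandard_transpose_iff.symm)).symm

lemma signTwist_eT (F : Type*) [Field F] (T : Tab n μ) :
    signTwist F (Fin n) (eT F T) = eTbar F T.transpose := by
  rw [eT, eTbar, numSYT_transpose, rowStab_transpose, colStab_transpose]
  simp only [map_smul, map_sum, signTwist_single]
  rw [Finset.sum_comm]
  congr 1
  refine Finset.sum_congr rfl fun σ _ => Finset.sum_congr rfl fun ρ _ => ?_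
  have hsign : Perm.sign σ * Perm.sign (σ * ρ) = Perm.sign ρ := by
    rw [Perm.sign_mul, ← mul_assoc, Int.units_mul_self, one_mul]
  rw [MonoidAlgebra.smul_single', MonoidAlgebra.smul_single', mul_one, mul_one, ← Int.cast_mul,
    ← Units.val_mul, hsign]

end Transpose

theorem stmt5_general (F : Type*) [Field F]
    (n : ℕ)
    (μ : YoungDiagram)
    (T : Fin (numSYT n μ) → Tab n μ) :
    ∀ g : Perm (Fin n), Perm.sign g = -1 →
      ((1 - ((List.finRange (numSYT n μ)).map (fun i => 1 - eT F (T i))).prod) +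
        (1 - ((List.finRange (numSYT n μ)).map
            (fun i => 1 - eTbar F (T i).transpose)).prod)).coeff g = 0 := by
  intro g hg
  have hφ : signTwist F (Fin n) (1 - ((List.finRange (numSYT n μ)).map
      (fun i => 1 - eT F (T i))).prod) =
      1 - ((List.finRange (numSYT n μ)).map (fun i => 1 - eTbar F (T i).transpose)).prod := by
    simp only [map_sub, map_one, map_list_prod, List.map_map, Function.comp_def, signTwist_eT]
  rw [← hφ]
  exact coeff_add_signTwist_of_sign_eq_neg_one _ hg

/-- Let `λ ≠ λ'` be a partition of `n` and `T 0, …, T (d_λ - 1)` an enumeration of all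
standard tableaux of shape `λ` such that `e_{T i} * e_{T j} = 0` and
`ē_{T i'} * ē_{T j'} = 0` whenever `i > j`. Then every odd permutation has coefficient `0`
in `e_λ^{S_n} + e_{λ'}^{S_n}`, where `e_λ^{S_n} = 1 − Π_i (1 − e_{T i})` and
`e_{λ'}^{S_n} = 1 − Π_i (1 − ē_{T i'})`; that is, the support of this element is
contained in the alternating group. -/
theorem stmt5 (F : Type*) [Field F] [Fintype F] (p : ℕ) [Fact p.Prime] [CharP F p]
    (n : ℕ) (hn : 0 < n) (hpn : n < p)
    (μ : YoungDiagram) (hμ : μ.card = n) (hne : μ.transpose ≠ μ)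
    (T : Fin (numSYT n μ) → Tab n μ)
    (hstd : ∀ i, IsStandard (T i))
    (hinj : Function.Injective T)
    (hsurj : ∀ S : Tab n μ, IsStandard S → ∃ i, T i = S)
    (horth : ∀ i j : Fin (numSYT n μ), j < i → eT F (T i) * eT F (T j) = 0)
    (horth' : ∀ i j : Fin (numSYT n μ), j < i →
      eTbar F (T i).transpose * eTbar F (T j).transpose = 0) :
    ∀ g : Perm (Fin n), Perm.sign g = -1 →
      ((1 - ((List.finRange (numSYT n μ)).map (fun i => 1 - eT F (T i))).prod) +
        (1 - ((List.finRange (numSYT n μ)).map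
            (fun i => 1 - eTbar F (T i).transpose)).prod)).coeff g = 0 :=
  stmt5_general F n μ T
end

section
/- Let n = 3 or n ≥ 5, and let F_q be a finite field whose characteristic does not divide n!/2. Let e be a nonzero central idempotent of the group algebra F_q A_n such that for every central idempotent f of F_q A_n either e·f = 0 or e·f = e, and suppose e ≠ Â_n, where Â_n = (n!/2)⁻¹·Σ_{σ∈A_n} σ. Then the map A_n → F_q A_n sending σ to σ·e is injective, and e·Â_n = 0. -/
/-!
The average `Â` of the group elements satisfies `x * Â = ε(x) • Â` for the augmentation `ε`.
So if a centrally primitive idempotent `e` had `e * Â = e`, then `e = ε(e) • Â` with `ε(e)` an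
idempotent scalar, forcing `e = 0` or `e = Â`; primitivity therefore gives `e * Â = 0`.
For central `e`, the elements `σ` with `σ * e = e` form a normal subgroup of `A_n`. By simplicity
it is trivial, which is injectivity, or everything, in which case `e = Â * e = e * Â = 0`.
-/

/-- `Â_n = (n!/2)⁻¹ Σ_{σ∈A_n} σ` in the group algebra `F_q A_n`. -/
noncomputable def altHat (F : Type*) [Field F] (n : ℕ) :
    MonoidAlgebra F (alternatingGroup (Fin n)) :=
  ((n.factorial / 2 : ℕ) : F)⁻¹ •
    ∑ᶠ σ : alternatingGroup (Fin n), MonoidAlgebra.of F (alternatingGroup (Fin n)) σ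

open MonoidAlgebra

namespace GroupAlgebra

section Stabilizer

variable {k G : Type*} [Semiring k] [Group G]

def stabilizer (e : k[G]) : Subgroup G where
  carrier := {g | of k G g * e = e}
  one_mem' := by
    change of k G 1 * e = e
    rw [map_one, one_mul]
  mul_mem' {a b} (ha : of k G a * e = e) (hb : of k G b * e = e) := by
    change of k G (a * b) * e = e
    rw [map_mul, mul_assoc, hb, ha]
  inv_mem' {a} (ha : of k G a * e = e) := by
    change of k G a⁻¹ * e = e
    conv_lhs => rw [← ha, ← mul_assoc, ← map_mul, inv_mul_cancel, map_one, one_mul]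

lemma mem_stabilizer {e : k[G]} {g : G} : g ∈ stabilizer e ↔ of k G g * e = e := Iff.rfl

lemma stabilizer_normal {e : k[G]} (he : ∀ x, e * x = x * e) : (stabilizer e).Normal where
  conj_mem a ha g := by
    have hconj : of k G (g * a * g⁻¹) * e = of k G g * (of k G a * e) * of k G g⁻¹ := by
      rw [map_mul, map_mul, mul_assoc _ _ e, ← he]
      simp only [mul_assoc]
    rw [mem_stabilizer] at *
    rw [hconj, ha, mul_assoc, he, ← mul_assoc, ← map_mul, mul_inv_cancel, map_one, one_mul]

lemma injective_of_mul_of_stabilizer_eq_bot {e : k[G]} (h : stabilizer e = ⊥) :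
    Function.Injective fun g => of k G g * e := by
  intro g g' (hgg' : of k G g * e = of k G g' * e)
  have : g'⁻¹ * g ∈ stabilizer e := by
    rw [mem_stabilizer, map_mul, mul_assoc, hgg', ← mul_assoc, ← map_mul, inv_mul_cancel,
      map_one, one_mul]
  rw [h, Subgroup.mem_bot, inv_mul_eq_one] at this
  exact this.symm

end Stabilizer

section Average

variable {k G : Type*} [CommSemiring k] [Group G]

variable (k G) in
noncomputable abbrev augmentation : k[G] →ₐ[k] k := lift k k G 1

variable [Fintype G] [Invertible (Fintype.card G : k)]

lemma mul_average (x : k[G]) : x * average k G = augmentation k G x • average k G := by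
  induction x using MonoidAlgebra.induction_on with
  | of g => simp [of_apply]
  | add x y hx hy => rw [add_mul, hx, hy, map_add, add_smul]
  | smul r x hx => rw [smul_mul_assoc, hx, map_smul, smul_smul, smul_eq_mul]

lemma average_mul (x : k[G]) : average k G * x = augmentation k G x • average k G := by
  induction x using MonoidAlgebra.induction_on with
  | of g => simp [of_apply]
  | add x y hx hy => rw [mul_add, hx, hy, map_add, add_smul]
  | smul r x hx => rw [mul_smul_comm, hx, map_smul, smul_smul, smul_eq_mul]

lemma average_mul_comm (x : k[G]) : average k G * x = x * average k G := by
  rw [mul_average, average_mul]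

lemma augmentation_average : augmentation k G (average k G) = 1 := by
  simp [average, map_sum]

lemma isIdempotentElem_average : IsIdempotentElem (average k G) := by
  rw [IsIdempotentElem, mul_average, augmentation_average, one_smul]

lemma average_mul_of_stabilizer_eq_top {e : k[G]} (h : stabilizer e = ⊤) :
    average k G * e = e := by
  have hfix (g : G) : of k G g * e = e := mem_stabilizer.mp (h ▸ Subgroup.mem_top g)
  rw [average, smul_mul_assoc, Finset.sum_mul]
  simp only [hfix, Finset.sum_const, Finset.card_univ]
  rw [← Nat.cast_smul_eq_nsmul k, smul_smul, invOf_mul_self, one_smul]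

lemma eq_average_of_mul_average_eq_self [IsLeftCancelMulZero k] {e : k[G]}
    (he : IsIdempotentElem e) (hne : e ≠ 0) (h : e * average k G = e) : e = average k G := by
  have he' : e = augmentation k G e • average k G := h.symm.trans (mul_average e)
  rcases IsIdempotentElem.iff_eq_zero_or_one.mp (he.map (augmentation k G)) with h0 | h1
  · exact absurd (he'.trans (by rw [h0, zero_smul])) hne
  · rwa [h1, one_smul] at he'

lemma mul_average_eq_zero [IsLeftCancelMulZero k] {e : k[G]} (he : IsIdempotentElem e)
    (hne : e ≠ 0)
    (hprim : ∀ f : k[G], IsIdempotentElem f → (∀ x, f * x = x * f) → e * f = 0 ∨ e * f = e)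
    (hneA : e ≠ average k G) : e * average k G = 0 :=
  (hprim _ isIdempotentElem_average average_mul_comm).resolve_right
    fun h => hneA (eq_average_of_mul_average_eq_self he hne h)

end Average

end GroupAlgebra

lemma isSimpleGroup_alternatingGroup_fin {n : ℕ} (hn : n = 3 ∨ 5 ≤ n) :
    IsSimpleGroup (alternatingGroup (Fin n)) := by
  rcases hn with rfl | hn
  · have : Fact (Nat.Prime 3) := ⟨Nat.prime_three⟩
    exact isSimpleGroup_of_prime_card (p := 3) (by rw [nat_card_alternatingGroup, Nat.card_fin]; rfl)
  · exact alternatingGroup.isSimpleGroup (by rwa [Nat.card_fin])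

lemma altHat_eq_average (F : Type*) [Field F] {n : ℕ} (hn : 2 ≤ n)
    [Invertible (Fintype.card (alternatingGroup (Fin n)) : F)] :
    altHat F n = GroupAlgebra.average F (alternatingGroup (Fin n)) := by
  have : Nontrivial (Fin n) := Fin.nontrivial_iff_two_le.mpr hn
  rw [altHat, GroupAlgebra.average, finsum_eq_sum_of_fintype, invOf_eq_inv,
    card_alternatingGroup, Fintype.card_fin]

open GroupAlgebra

theorem stmt13_general (n : ℕ) (hn : n = 3 ∨ 5 ≤ n)
    (F : Type*) [Field F]
    (hchar : ¬ (ringChar F ∣ n.factorial / 2))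
    (e : MonoidAlgebra F (alternatingGroup (Fin n))) (he : IsIdempotentElem e)
    (hne : e ≠ 0)
    (hcentral : ∀ x : MonoidAlgebra F (alternatingGroup (Fin n)), e * x = x * e)
    (hprim : ∀ f : MonoidAlgebra F (alternatingGroup (Fin n)), IsIdempotentElem f →
      (∀ x : MonoidAlgebra F (alternatingGroup (Fin n)), f * x = x * f) →
      e * f = 0 ∨ e * f = e)
    (hneA : e ≠ altHat F n) :
    Function.Injective (fun σ : alternatingGroup (Fin n) =>
      MonoidAlgebra.of F (alternatingGroup (Fin n)) σ * e) ∧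
    e * altHat F n = 0 := by
  have h2 : 2 ≤ n := by omega
  have : Nontrivial (Fin n) := Fin.nontrivial_iff_two_le.mpr h2
  have := isSimpleGroup_alternatingGroup_fin hn
  have : Invertible (Fintype.card (alternatingGroup (Fin n)) : F) := invertibleOfNonzero <| by
    rw [card_alternatingGroup, Fintype.card_fin]
    exact fun h => hchar ((ringChar.spec F _).mp h)
  rw [altHat_eq_average F h2] at hneA ⊢
  have hzero := mul_average_eq_zero he hne hprim hneA
  refine ⟨?_, hzero⟩
  rcases (stabilizer_normal hcentral).eq_bot_or_eq_top with hbot | htop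
  · exact injective_of_mul_of_stabilizer_eq_bot hbot
  · exact absurd (by rw [← average_mul_of_stabilizer_eq_top htop, average_mul_comm, hzero]) hne

/-- Let `n = 3` or `n ≥ 5` and let `F_q` be a finite field whose characteristic does not
divide `n!/2`. Every centrally primitive central idempotent `e ≠ Â_n` of `F_q A_n`
yields an injective map `σ ↦ σ·e`, and satisfies `e·Â_n = 0`. -/
theorem stmt13 (n : ℕ) (hn : n = 3 ∨ 5 ≤ n)
    (F : Type*) [Field F] [Fintype F]
    (hchar : ¬ (ringChar F ∣ n.factorial / 2))
    (e : MonoidAlgebra F (alternatingGroup (Fin n))) (he : IsIdempotentElem e)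
    (hne : e ≠ 0)
    (hcentral : ∀ x : MonoidAlgebra F (alternatingGroup (Fin n)), e * x = x * e)
    (hprim : ∀ f : MonoidAlgebra F (alternatingGroup (Fin n)), IsIdempotentElem f →
      (∀ x : MonoidAlgebra F (alternatingGroup (Fin n)), f * x = x * f) →
      e * f = 0 ∨ e * f = e)
    (hneA : e ≠ altHat F n) :
    Function.Injective (fun σ : alternatingGroup (Fin n) =>
      MonoidAlgebra.of F (alternatingGroup (Fin n)) σ * e) ∧
    e * altHat F n = 0 :=
  stmt13_general n hn F hchar e he hne hcentral hprim hneA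
end
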